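/- Marginal Pinsker bound: for every step t with 1 ≤ t ≤ T, ‖d_t^{π_θ} − d_t^{π_roll}‖_TV ≤ √( (t−1) · D_KL^{tok,max} / 2 ), where ‖·‖_TV denotes total variation distance between distributions on contexts and D_KL^{tok,max} = max over steps t and contexts c of D_KL(π_roll(·|c) ‖ π_θ(·|c)) with D_KL(p‖q) = Σ_v p(v) log(p(v)/q(v)). -/

import Mathlib

open Finset

section Setup

variable {X V : Type*}

/-- A policy assigns to each context `(x, y_{<t})` (a prompt together with a token
prefix of length `t`) a strictly positive probability distribution on the next token. -/
structure Policy (X V : Type*) [Fintype V] where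
  prob : ∀ t : ℕ, X × (Fin t → V) → V → ℝ
  pos : ∀ t c v, 0 < prob t c v
  sum_one : ∀ t c, ∑ v, prob t c v = 1

variable [Fintype X] [Fintype V]

/-- Trajectory probability `P^π(y | x) = ∏_t π(y_t | x, y_{<t})`. -/
noncomputable def traj (π : Policy X V) (T : ℕ) (x : X) (y : Fin T → V) : ℝ :=
  ∏ t : Fin T, π.prob t.1 (x, fun s : Fin t.1 => y (Fin.castLE t.isLt.le s)) (y t)

/-- Context visitation mass at prefix length `k`: this is the paper's `d_{k+1}^π`,
a distribution on pairs (prompt, prefix of `k` tokens). -/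
noncomputable def visit (π : Policy X V) (P : X → ℝ) (k : ℕ) (c : X × (Fin k → V)) : ℝ :=
  P c.1 * ∏ s : Fin k, π.prob s.1 (c.1, fun u : Fin s.1 => c.2 (Fin.castLE s.isLt.le u)) (c.2 s)

/-- Total variation distance `½ ∑ |p - q|`. -/
noncomputable def tvDist {α : Type*} [Fintype α] (p q : α → ℝ) : ℝ :=
  (∑ a, |p a - q a|) / 2

/-- KL divergence `∑ p log (p/q)`. -/
noncomputable def klDiv {α : Type*} [Fintype α] (p q : α → ℝ) : ℝ :=
  ∑ a, p a * Real.log (p a / q a)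

/-- The objective `J(π) = E_{x∼P} E_{y∼P^π(·|x)}[R(x,y)]`. -/
noncomputable def Jval (P : X → ℝ) (T : ℕ) (R : X → (Fin T → V) → ℝ) (π : Policy X V) : ℝ :=
  ∑ x, P x * ∑ y : Fin T → V, traj π T x y * R x y

/-- `Q^π(c, v)`: conditional expectation of the reward under continuation by `π`,
given context `c` (of length `k`) and next token `v`. -/
noncomputable def Qval (T : ℕ) (R : X → (Fin T → V) → ℝ) (π : Policy X V)
    (k : ℕ) (hk : k < T) (c : X × (Fin k → V)) (v : V) : ℝ := by
  classical
  exact ∑ y : Fin T → V,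
    if (∀ s : Fin k, y (Fin.castLE hk.le s) = c.2 s) ∧ y ⟨k, hk⟩ = v then
      (∏ s : Fin T, if k < s.1 then
          π.prob s.1 (c.1, fun u : Fin s.1 => y (Fin.castLE s.isLt.le u)) (y s)
        else 1) * R c.1 y
    else 0

/-- `V^π(c) = E_{v ∼ π(·|c)}[Q^π(c, v)]`. -/
noncomputable def Vval (T : ℕ) (R : X → (Fin T → V) → ℝ) (π : Policy X V)
    (k : ℕ) (hk : k < T) (c : X × (Fin k → V)) : ℝ :=
  ∑ v, π.prob k c v * Qval T R π k hk c v

/-- Per-step advantage `A_t(c, v) = Q^{π_roll}(c,v) - V^{π_roll}(c)`. -/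
noncomputable def Aval (T : ℕ) (R : X → (Fin T → V) → ℝ) (πroll : Policy X V)
    (k : ℕ) (hk : k < T) (c : X × (Fin k → V)) (v : V) : ℝ :=
  Qval T R πroll k hk c v - Vval T R πroll k hk c

/-- `g_t(c) = E_{v ∼ π_θ(·|c)}[A_t(c, v)]`. -/
noncomputable def gval (T : ℕ) (R : X → (Fin T → V) → ℝ) (πroll πθ : Policy X V)
    (k : ℕ) (hk : k < T) (c : X × (Fin k → V)) : ℝ :=
  ∑ v, πθ.prob k c v * Aval T R πroll k hk c v

/-- Surrogate objective `L = ∑_{t=1}^T E_{c ∼ d_t^{π_roll}}[g_t(c)]`. -/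
noncomputable def surrogate (P : X → ℝ) (T : ℕ) (R : X → (Fin T → V) → ℝ)
    (πroll πθ : Policy X V) : ℝ :=
  ∑ k : Fin T, ∑ c : X × (Fin k.1 → V), visit πroll P k.1 c * gval T R πroll πθ k.1 k.isLt c

/-- Approximation error `Error = J(π_θ) - J(π_roll) - L`. -/
noncomputable def errVal (P : X → ℝ) (T : ℕ) (R : X → (Fin T → V) → ℝ)
    (πroll πθ : Policy X V) : ℝ :=
  Jval P T R πθ - Jval P T R πroll - surrogate P T R πroll πθ

/-- Sequence-level KL divergence `D_KL^seq = E_{x∼P}[D_KL(P^{π_roll}(·|x) ‖ P^{π_θ}(·|x))]`. -/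
noncomputable def seqKL (P : X → ℝ) (T : ℕ) (πroll πθ : Policy X V) : ℝ :=
  ∑ x, P x * klDiv (fun y : Fin T → V => traj πroll T x y) (fun y => traj πθ T x y)

end Setup



section AuxPinsker

noncomputable def Hfun (x : ℝ) : ℝ := (x+1) * Real.log x - 2*(x-1)
noncomputable def Gfun (x : ℝ) : ℝ := 2*(x+2)*(x*Real.log x - x + 1) - 3*(x-1)^2

lemma Hfun_deriv {x : ℝ} (hx : 0 < x) :
    HasDerivAt Hfun (Real.log x + x⁻¹ - 1) x := by
  have h1 : HasDerivAt (fun x : ℝ => (x+1) * Real.log x) (1 * Real.log x + (x+1) * x⁻¹) x :=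
    (((hasDerivAt_id x).add_const 1).mul (Real.hasDerivAt_log hx.ne'))
  have h2 : HasDerivAt (fun x : ℝ => 2*(x-1)) 2 x := by
    simpa using ((hasDerivAt_id x).sub_const 1).const_mul 2
  have := h1.sub h2
  convert this using 1
  · rfl
  · rfl
  · rfl
  field_simp
  ring

lemma Hfun_mono : MonotoneOn Hfun (Set.Ioi (0:ℝ)) := by
  have hd : ∀ x ∈ Set.Ioi (0:ℝ), HasDerivAt Hfun (Real.log x + x⁻¹ - 1) x :=
    fun x hx => Hfun_deriv hx
  apply monotoneOn_of_deriv_nonneg (convex_Ioi 0)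
  · exact fun x hx => (hd x hx).differentiableAt.continuousAt.continuousWithinAt
  · intro x hx
    rw [interior_Ioi] at hx
    exact (hd x hx).differentiableAt.differentiableWithinAt
  · intro x hx
    rw [interior_Ioi] at hx
    rw [(hd x hx).deriv]
    have := Real.one_sub_inv_le_log_of_pos hx
    linarith

lemma Hfun_one : Hfun 1 = 0 := by simp [Hfun]

lemma Gfun_deriv {x : ℝ} (hx : 0 < x) :
    HasDerivAt Gfun (4 * Hfun x) x := by
  have hxl : HasDerivAt (fun x : ℝ => x * Real.log x) (Real.log x + 1) x := by
    have := (hasDerivAt_id x).mul (Real.hasDerivAt_log hx.ne')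
    convert this using 1
    · rfl
    · rfl
    · rfl
    simp [hx.ne']
  have h1 : HasDerivAt (fun x : ℝ => 2*(x+2)) 2 x := by
    simpa using ((hasDerivAt_id x).add_const 2).const_mul 2
  have h2 : HasDerivAt (fun x : ℝ => x*Real.log x - x + 1)
      ((Real.log x + 1) - 1) x := by
    simpa using (hxl.sub (hasDerivAt_id x)).add_const 1
  have h3 : HasDerivAt (fun x : ℝ => 3*(x-1)^2) (3*(2*(x-1))) x := by
    have := (((hasDerivAt_id x).sub_const 1).pow 2).const_mul 3
    simpa using this
  have := ((h1.mul h2).sub h3)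
  convert this using 1
  · rfl
  · rfl
  · rfl
  unfold Hfun
  ring

lemma Gfun_nonneg {x : ℝ} (hx : 0 < x) : 0 ≤ Gfun x := by
  have hone : Gfun 1 = 0 := by simp [Gfun]
  rcases le_or_gt 1 x with h | h
  · have mono : MonotoneOn Gfun (Set.Ici (1:ℝ)) := by
      apply monotoneOn_of_deriv_nonneg (convex_Ici 1)
      · exact fun y hy => (Gfun_deriv (lt_of_lt_of_le one_pos hy)).differentiableAt.continuousAt.continuousWithinAt
      · intro y hy
        rw [interior_Ici] at hy
        exact (Gfun_deriv (lt_trans one_pos hy)).differentiableAt.differentiableWithinAt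
      · intro y hy
        rw [interior_Ici] at hy
        rw [(Gfun_deriv (lt_trans one_pos hy)).deriv]
        have : Hfun 1 ≤ Hfun y := Hfun_mono (Set.mem_Ioi.2 one_pos)
          (Set.mem_Ioi.2 (lt_trans one_pos hy)) hy.le
        rw [Hfun_one] at this
        linarith
    have := mono (Set.mem_Ici.2 le_rfl) (Set.mem_Ici.2 h) h
    rw [hone] at this; exact this
  · have anti : AntitoneOn Gfun (Set.Ioc (0:ℝ) 1) := by
      apply antitoneOn_of_deriv_nonpos (convex_Ioc 0 1)
      · exact fun y hy => (Gfun_deriv hy.1).differentiableAt.continuousAt.continuousWithinAt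
      · intro y hy
        rw [interior_Ioc] at hy
        exact (Gfun_deriv hy.1).differentiableAt.differentiableWithinAt
      · intro y hy
        rw [interior_Ioc] at hy
        rw [(Gfun_deriv hy.1).deriv]
        have : Hfun y ≤ Hfun 1 := Hfun_mono (Set.mem_Ioi.2 hy.1)
          (Set.mem_Ioi.2 one_pos) hy.2.le
        rw [Hfun_one] at this
        linarith
    have := anti (Set.mem_Ioc.2 ⟨hx, h.le⟩) (Set.mem_Ioc.2 ⟨one_pos, le_rfl⟩) h.le
    rw [hone] at this; exact this

lemma key_pointwise (p q : ℝ) (hp : 0 ≤ p) (hq : 0 ≤ q) (h : q = 0 → p = 0) :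
    3*(p-q)^2/(2*(p+2*q)) ≤ p * Real.log (p/q) - p + q := by
  rcases eq_or_lt_of_le hq with hq0 | hq0
  · rw [h hq0.symm, ← hq0]; norm_num
  rcases eq_or_lt_of_le hp with hp0 | hp0
  · rw [← hp0]
    rw [div_le_iff₀ (by positivity)]
    nlinarith
  · set x := p / q with hxdef
    have hx : 0 < x := div_pos hp0 hq0
    have hG := Gfun_nonneg hx
    unfold Gfun at hG
    have hpx : p = q * x := by rw [hxdef]; field_simp
    rw [div_le_iff₀ (by positivity)]
    have h2 : 0 ≤ q^2 * (2*(x+2)*(x*Real.log x - x + 1) - 3*(x-1)^2) := by positivity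
    rw [hpx]
    nlinarith [sq_nonneg q]

lemma pinsker_finite {α : Type*} [Fintype α] (p q : α → ℝ)
    (hp0 : ∀ a, 0 ≤ p a) (hq0 : ∀ a, 0 ≤ q a)
    (habs : ∀ a, q a = 0 → p a = 0)
    (hp1 : ∑ a, p a = 1) (hq1 : ∑ a, q a = 1) :
    tvDist q p ≤ Real.sqrt (klDiv p q / 2) := by
  set S := ∑ a, |p a - q a| with hS
  have hS0 : 0 ≤ S := Finset.sum_nonneg fun a _ => abs_nonneg _
  have hCS : S^2 ≤ (∑ a, 3*(p a - q a)^2/(2*(p a + 2*q a))) * (∑ a, 2*(p a + 2*q a)/3) := by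
    have := Finset.sum_mul_sq_le_sq_mul_sq Finset.univ
      (fun a => Real.sqrt (3*(p a - q a)^2/(2*(p a + 2*q a))))
      (fun a => Real.sqrt (2*(p a + 2*q a)/3))
    have heq : ∀ a : α, Real.sqrt (3*(p a - q a)^2/(2*(p a + 2*q a))) *
        Real.sqrt (2*(p a + 2*q a)/3) = |p a - q a| := by
      intro a
      have hpq2 : (0:ℝ) ≤ p a + 2*q a := by nlinarith [hp0 a, hq0 a]
      rcases eq_or_lt_of_le hpq2 with h0 | h0
      · have hpa : p a = 0 := by nlinarith [hp0 a, hq0 a]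
        have hqa : q a = 0 := by nlinarith [hp0 a, hq0 a]
        simp [hpa, hqa]
      · rw [← Real.sqrt_mul (by positivity)]
        rw [show 3*(p a - q a)^2/(2*(p a + 2*q a)) * (2*(p a + 2*q a)/3)
            = (p a - q a)^2 by field_simp; exact mul_div_cancel_right₀ _ (by linarith)]
        exact Real.sqrt_sq_eq_abs _
    calc S^2 = (∑ a, Real.sqrt (3*(p a - q a)^2/(2*(p a + 2*q a))) *
          Real.sqrt (2*(p a + 2*q a)/3))^2 := by
          rw [hS]; congr 1; exact (Finset.sum_congr rfl fun a _ => heq a).symm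
      _ ≤ (∑ a, Real.sqrt (3*(p a - q a)^2/(2*(p a + 2*q a)))^2) *
          (∑ a, Real.sqrt (2*(p a + 2*q a)/3)^2) := this
      _ = _ := by
          congr 1
          · refine Finset.sum_congr rfl fun a _ => Real.sq_sqrt ?_
            have : (0:ℝ) ≤ p a + 2*q a := by nlinarith [hp0 a, hq0 a]
            exact div_nonneg (by positivity) (by linarith)
          · refine Finset.sum_congr rfl fun a _ => Real.sq_sqrt ?_
            have : (0:ℝ) ≤ p a + 2*q a := by nlinarith [hp0 a, hq0 a]
            linarith
  have hB : (∑ a, 2*(p a + 2*q a)/3) = 2 := by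
    calc ∑ a, 2*(p a + 2*q a)/3 = ∑ a, (2/3*p a + 4/3*q a) :=
          Finset.sum_congr rfl (fun a _ => by ring)
      _ = 2/3*(∑ a, p a) + 4/3*(∑ a, q a) := by
          rw [Finset.sum_add_distrib, Finset.mul_sum, Finset.mul_sum]
      _ = 2 := by rw [hp1, hq1]; norm_num
  have hA : (∑ a, 3*(p a - q a)^2/(2*(p a + 2*q a))) ≤ klDiv p q := by
    have : klDiv p q = ∑ a, (p a * Real.log (p a / q a) - p a + q a) := by
      unfold klDiv
      rw [Finset.sum_add_distrib, Finset.sum_sub_distrib, hp1, hq1]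
      ring
    rw [this]
    exact Finset.sum_le_sum fun a _ => key_pointwise _ _ (hp0 a) (hq0 a) (habs a)
  have hfinal : S^2 ≤ 2 * klDiv p q := by
    rw [hB] at hCS
    nlinarith [hA, Finset.sum_nonneg (fun a (_ : a ∈ Finset.univ) =>
      div_nonneg (by positivity : (0:ℝ) ≤ 3*(p a - q a)^2) (by nlinarith [hp0 a, hq0 a] : (0:ℝ) ≤ 2*(p a + 2*q a)))]
  have hKL : 0 ≤ klDiv p q := by
    refine le_trans (Finset.sum_nonneg fun a _ => ?_) hA
    have : (0:ℝ) ≤ p a + 2*q a := by nlinarith [hp0 a, hq0 a]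
    exact div_nonneg (by positivity) (by linarith)
  unfold tvDist
  rw [show (∑ a, |q a - p a|) = S by rw [hS]; exact Finset.sum_congr rfl fun a _ => abs_sub_comm _ _]
  rw [Real.le_sqrt (by linarith : (0:ℝ) ≤ S / 2)]
  swap
  · linarith
  rw [div_pow]
  nlinarith

variable {X V : Type*} [Fintype X] [Fintype V]

def snocProdEquiv (X V : Type*) (k : ℕ) : (X × (Fin k → V)) × V ≃ X × (Fin (k+1) → V) where
  toFun p := (p.1.1, Fin.snoc p.1.2 p.2)
  invFun c := ((c.1, Fin.init c.2), c.2 (Fin.last k))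
  left_inv p := by
    ext <;> simp [Fin.init_snoc]
  right_inv c := by
    ext <;> simp [Fin.snoc_init_self]

lemma sum_snoc (k : ℕ) (f : X × (Fin (k+1) → V) → ℝ) :
    ∑ c, f c = ∑ c : X × (Fin k → V), ∑ v, f (c.1, Fin.snoc c.2 v) := by
  rw [← Equiv.sum_comp (snocProdEquiv X V k) f, Fintype.sum_prod_type]
  rfl

lemma snoc_castLE {k : ℕ} (y : Fin k → V) (v : V) {m : ℕ} (hm : m ≤ k) (h : m ≤ k+1) (u : Fin m) :
    (Fin.snoc y v : Fin (k+1) → V) (Fin.castLE h u) = y (Fin.castLE hm u) := by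
  have he : (Fin.castLE h u : Fin (k+1)) = Fin.castSucc (Fin.castLE hm u) := by
    apply Fin.ext; rfl
  rw [he, Fin.snoc_castSucc]

lemma visit_snoc (π : Policy X V) (P : X → ℝ) (k : ℕ) (x : X) (y : Fin k → V) (v : V) :
    visit π P (k+1) (x, Fin.snoc y v) = visit π P k (x, y) * π.prob k (x, y) v := by
  unfold visit
  rw [Fin.prod_univ_castSucc, ← mul_assoc]
  simp only [Fin.snoc_castSucc, Fin.snoc_last, Fin.coe_castSucc, Fin.val_last]
  congr 2
  · apply Finset.prod_congr rfl
    intro s _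
    congr 1
    congr 1
    funext u
    exact snoc_castLE y v s.isLt.le _ u
  · congr 1
    funext u
    exact snoc_castLE y v (le_refl k) _ u

lemma visit_nonneg (π : Policy X V) (P : X → ℝ) (hP0 : ∀ x, 0 ≤ P x) (k : ℕ)
    (c : X × (Fin k → V)) : 0 ≤ visit π P k c :=
  mul_nonneg (hP0 c.1) (Finset.prod_nonneg fun _ _ => (π.pos _ _ _).le)

lemma visit_pos (π : Policy X V) (P : X → ℝ) (k : ℕ)
    (c : X × (Fin k → V)) (h : 0 < P c.1) : 0 < visit π P k c :=
  mul_pos h (Finset.prod_pos fun _ _ => π.pos _ _ _)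

lemma visit_eq_zero (π : Policy X V) (P : X → ℝ) (hP0 : ∀ x, 0 ≤ P x) (k : ℕ)
    (c : X × (Fin k → V)) (h : visit π P k c = 0) : P c.1 = 0 := by
  by_contra hne
  exact (visit_pos π P k c (lt_of_le_of_ne (hP0 c.1) (Ne.symm hne))).ne' h

lemma sum_visit (π : Policy X V) (P : X → ℝ) (hP1 : ∑ x, P x = 1) :
    ∀ k : ℕ, ∑ c : X × (Fin k → V), visit π P k c = 1 := by
  intro k
  induction k with
  | zero =>
    rw [Fintype.sum_prod_type]
    simpa [visit] using hP1
  | succ k ih =>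
    rw [sum_snoc k (visit π P (k+1))]
    have hstep : ∀ c : X × (Fin k → V), ∑ v, visit π P (k+1) (c.1, Fin.snoc c.2 v)
        = visit π P k c := by
      intro c
      have hv : ∀ v, visit π P (k+1) (c.1, Fin.snoc c.2 v) = visit π P k c * π.prob k c v := by
        intro v
        rw [← visit_snoc π P k c.1 c.2 v]
      rw [Finset.sum_congr rfl fun v _ => hv v, ← Finset.mul_sum, π.sum_one k c, mul_one]
    rw [Finset.sum_congr rfl fun c _ => hstep c, ih]

lemma klDiv_visit_le (πroll πθ : Policy X V) (P : X → ℝ)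
    (hP0 : ∀ x, 0 ≤ P x) (hP1 : ∑ x, P x = 1) (T : ℕ) (Dkl : ℝ)
    (hD : ∀ k : ℕ, k < T → ∀ c : X × (Fin k → V),
      klDiv (πroll.prob k c) (πθ.prob k c) ≤ Dkl) :
    ∀ k : ℕ, k ≤ T → klDiv (visit πroll P k) (visit πθ P k) ≤ k * Dkl := by
  intro k
  induction k with
  | zero =>
    intro _
    have hz : ∀ c : X × (Fin 0 → V),
        visit πroll P 0 c * Real.log (visit πroll P 0 c / visit πθ P 0 c) = 0 := by
      intro c
      unfold visit
      simp only [Finset.univ_eq_empty, Finset.prod_empty, mul_one]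
      rcases eq_or_ne (P c.1) 0 with h | h
      · simp [h]
      · rw [div_self h, Real.log_one, mul_zero]
    unfold klDiv
    rw [Finset.sum_congr rfl fun c _ => hz c]
    simp
  | succ k ih =>
    intro h
    have hkT : k < T := h
    have ihk := ih (Nat.le_of_succ_le h)
    have hmain : klDiv (visit πroll P (k+1)) (visit πθ P (k+1))
        = klDiv (visit πroll P k) (visit πθ P k)
          + ∑ c : X × (Fin k → V), visit πroll P k c *
              klDiv (πroll.prob k c) (πθ.prob k c) := by
      unfold klDiv
      rw [sum_snoc k]
      have hinner : ∀ c : X × (Fin k → V),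
          (∑ v, visit πroll P (k+1) (c.1, Fin.snoc c.2 v) *
            Real.log (visit πroll P (k+1) (c.1, Fin.snoc c.2 v) /
              visit πθ P (k+1) (c.1, Fin.snoc c.2 v)))
          = visit πroll P k c * Real.log (visit πroll P k c / visit πθ P k c)
            + visit πroll P k c *
              ∑ v, πroll.prob k c v * Real.log (πroll.prob k c v / πθ.prob k c v) := by
        intro c
        have hre : ∀ v, visit πroll P (k+1) (c.1, Fin.snoc c.2 v) *
            Real.log (visit πroll P (k+1) (c.1, Fin.snoc c.2 v) /
              visit πθ P (k+1) (c.1, Fin.snoc c.2 v))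
            = (visit πroll P k c * πroll.prob k c v) *
              Real.log ((visit πroll P k c * πroll.prob k c v) /
                (visit πθ P k c * πθ.prob k c v)) := by
          intro v
          rw [visit_snoc, visit_snoc]
        rw [Finset.sum_congr rfl fun v _ => hre v]
        rcases eq_or_lt_of_le (visit_nonneg πroll P hP0 k c) with hR0 | hR0
        · rw [← hR0]
          simp
        · have hPc : 0 < P c.1 := by
            rcases eq_or_lt_of_le (hP0 c.1) with h' | h'
            · exfalso
              have : visit πroll P k c = 0 := by
                unfold visit; rw [← h', zero_mul]
              exact hR0.ne this.symm
            · exact h'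
          have hT0 : 0 < visit πθ P k c := visit_pos πθ P k c hPc
          have hlog : ∀ v, Real.log ((visit πroll P k c * πroll.prob k c v) /
                (visit πθ P k c * πθ.prob k c v))
              = Real.log (visit πroll P k c / visit πθ P k c)
                + Real.log (πroll.prob k c v / πθ.prob k c v) := by
            intro v
            rw [← div_mul_div_comm]
            exact Real.log_mul (div_pos hR0 hT0).ne' (div_pos (πroll.pos k c v) (πθ.pos k c v)).ne'
          rw [Finset.sum_congr rfl fun v _ => by rw [hlog v]]
          have : ∀ v, visit πroll P k c * πroll.prob k c v *
              (Real.log (visit πroll P k c / visit πθ P k c)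
                + Real.log (πroll.prob k c v / πθ.prob k c v))
              = visit πroll P k c * Real.log (visit πroll P k c / visit πθ P k c) * πroll.prob k c v
                + visit πroll P k c * (πroll.prob k c v * Real.log (πroll.prob k c v / πθ.prob k c v)) := by
            intro v; ring
          rw [Finset.sum_congr rfl fun v _ => this v, Finset.sum_add_distrib,
            ← Finset.mul_sum, ← Finset.mul_sum, πroll.sum_one k c, mul_one]
      rw [Finset.sum_congr rfl fun c _ => hinner c, Finset.sum_add_distrib]
    rw [hmain]
    have hsum : ∑ c : X × (Fin k → V), visit πroll P k c *
        klDiv (πroll.prob k c) (πθ.prob k c) ≤ Dkl := by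
      calc ∑ c : X × (Fin k → V), visit πroll P k c * klDiv (πroll.prob k c) (πθ.prob k c)
          ≤ ∑ c : X × (Fin k → V), visit πroll P k c * Dkl :=
            Finset.sum_le_sum fun c _ =>
              mul_le_mul_of_nonneg_left (hD k hkT c) (visit_nonneg πroll P hP0 k c)
        _ = (∑ c : X × (Fin k → V), visit πroll P k c) * Dkl := by rw [Finset.sum_mul]
        _ = Dkl := by rw [sum_visit πroll P hP1 k, one_mul]
    push_cast
    linarith

end AuxPinsker

/-- **Marginal Pinsker bound**: for every `1 ≤ t ≤ T`,
`‖d_t^{π_θ} − d_t^{π_roll}‖_TV ≤ √((t−1) · D_KL^tok,max / 2)`.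
Here `Dkl` is (an upper bound on, in particular the maximum of) the token-level KL
divergences `D_KL(π_roll(·|c) ‖ π_θ(·|c))` over all steps and contexts, and
`d_t^π = visit π P (t−1)`. -/
theorem marginal_pinsker_bound
    {X V : Type*} [Fintype X] [Fintype V]
    (T : ℕ) (hT : 1 ≤ T)
    (P : X → ℝ) (hP0 : ∀ x, 0 ≤ P x) (hP1 : ∑ x, P x = 1)
    (πroll πθ : Policy X V)
    (Dkl : ℝ)
    (hD : ∀ k : ℕ, k < T → ∀ c : X × (Fin k → V),
      klDiv (πroll.prob k c) (πθ.prob k c) ≤ Dkl)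
    (t : ℕ) (ht1 : 1 ≤ t) (ht2 : t ≤ T) :
    tvDist (visit πθ P (t - 1)) (visit πroll P (t - 1)) ≤
      Real.sqrt (((t : ℝ) - 1) * Dkl / 2) := by
  set k := t - 1 with hk
  have hkT : k < T := by omega
  have hKLle : klDiv (visit πroll P k) (visit πθ P k) ≤ (k : ℝ) * Dkl :=
    klDiv_visit_le πroll πθ P hP0 hP1 T Dkl hD k hkT.le
  have habs : ∀ c : X × (Fin k → V), visit πθ P k c = 0 → visit πroll P k c = 0 := by
    intro c h
    have hPc : P c.1 = 0 := visit_eq_zero πθ P hP0 k c h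
    unfold visit
    rw [hPc, zero_mul]
  have hpin := pinsker_finite (visit πroll P k) (visit πθ P k)
    (visit_nonneg πroll P hP0 k) (visit_nonneg πθ P hP0 k) habs
    (sum_visit πroll P hP1 k) (sum_visit πθ P hP1 k)
  refine hpin.trans (Real.sqrt_le_sqrt ?_)
  have hc : ((t : ℝ) - 1) = (k : ℝ) := by
    rw [hk]
    push_cast [Nat.cast_sub ht1]
    ring
  rw [hc]
  linarith
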